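/- arXiv:1410.3954 — 2 statements merged into one kernel-verified Lean document; each statement's English description precedes it below -/
import Mathlib

section
/- In PG(2,q) with q an odd prime power, there are exactly q^2(q-1) proper conics passing through the two points [1,0,0] and [0,1,0]. -/
/-!
The form of a conic through `[1,0,0]` and `[0,1,0]` has no `x²` and no `y²` term, and properness
forces its `xy` coefficient to be nonzero. Since `2` is invertible, rescaling and completing the
product turns the conic into `(x + a z) (y + b z) = k z²` with `k ≠ 0`. The triple
`(a, b, k) ∈ F × F × Fˣ` is recovered from the point set: `x = -a` and `y = -b` are the only
coordinates missed by the affine hyperbola `(x + a) (y + b) = k`, and then `k` is read off any of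
its points. So these conics are in bijection with `F × F × Fˣ`, which has `q² (q - 1)` elements.
-/

open Matrix

/-- The zero set in `PG(2,q)` of the quadratic form associated to a symmetric matrix `M`. -/
def conicSet {F : Type} [Field F] (M : Matrix (Fin 3) (Fin 3) F) :
    Set (Projectivization F (Fin 3 → F)) :=
  {p | p.rep ⬝ᵥ M.mulVec p.rep = 0}

/-- A proper conic: the zero set of a quadratic form with invertible symmetric matrix. -/
def IsProperConic {F : Type} [Field F] (S : Set (Projectivization F (Fin 3 → F))) : Prop :=
  ∃ M : Matrix (Fin 3) (Fin 3) F, M.IsSymm ∧ IsUnit M.det ∧ S = conicSet M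

section Conics

variable {F : Type} [Field F]

theorem mk_mem_conicSet_iff (M : Matrix (Fin 3) (Fin 3) F) (v : Fin 3 → F) (hv : v ≠ 0) :
    Projectivization.mk F v hv ∈ conicSet M ↔ v ⬝ᵥ M *ᵥ v = 0 := by
  obtain ⟨a, ha⟩ := Projectivization.exists_smul_eq_mk_rep F v hv
  simp only [conicSet, Set.mem_ofPred_eq, ← ha, Matrix.mulVec_smul, smul_dotProduct,
    dotProduct_smul, smul_eq_mul, Units.smul_def, mul_eq_zero, a.ne_zero, false_or]

theorem conicSet_smul {t : F} (ht : t ≠ 0) (M : Matrix (Fin 3) (Fin 3) F) :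
    conicSet (t • M) = conicSet M := by
  ext p
  simp [conicSet, Matrix.smul_mulVec, ht]

/-- The conic `(x + a z) (y + b z) = k z²`, scaled by `2` so that no `1 / 2` appears. -/
def hyperbolaMatrix (a b k : F) : Matrix (Fin 3) (Fin 3) F :=
  !![0, 1, b; 1, 0, a; b, a, 2 * (a * b - k)]

theorem hyperbolaMatrix_isSymm (a b k : F) : (hyperbolaMatrix a b k).IsSymm := by
  ext i j
  fin_cases i <;> fin_cases j <;> rfl

theorem det_hyperbolaMatrix (a b k : F) : (hyperbolaMatrix a b k).det = 2 * k := by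
  simp [hyperbolaMatrix, Matrix.det_fin_three]
  ring

theorem dotProduct_mulVec_hyperbolaMatrix (a b k : F) (v : Fin 3 → F) :
    v ⬝ᵥ hyperbolaMatrix a b k *ᵥ v = 2 * ((v 0 + a * v 2) * (v 1 + b * v 2) - k * v 2 ^ 2) := by
  simp [hyperbolaMatrix, Matrix.mulVec, dotProduct, Fin.sum_univ_three]
  ring

theorem mk_affine_mem_conicSet_hyperbolaMatrix_iff (h2 : (2 : F) ≠ 0) (a b k x y : F) :
    Projectivization.mk F ![x, y, 1] (by simp) ∈ conicSet (hyperbolaMatrix a b k) ↔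
      (x + a) * (y + b) = k := by
  rw [mk_mem_conicSet_iff, dotProduct_mulVec_hyperbolaMatrix]
  simp [h2, sub_eq_zero]

theorem smul_eq_hyperbolaMatrix (h2 : (2 : F) ≠ 0) {M : Matrix (Fin 3) (Fin 3) F} (hM : M.IsSymm)
    (h00 : M 0 0 = 0) (h11 : M 1 1 = 0) (h01 : M 0 1 ≠ 0) :
    (M 0 1)⁻¹ • M = hyperbolaMatrix (M 1 2 / M 0 1) (M 0 2 / M 0 1)
      (M 1 2 / M 0 1 * (M 0 2 / M 0 1) - M 2 2 / (2 * M 0 1)) := by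
  have hsymm : ∀ i j, M j i = M i j := hM.apply
  ext i j
  fin_cases i <;> fin_cases j <;>
    simp [hyperbolaMatrix, h00, h11, hsymm 0 1, hsymm 0 2, hsymm 1 2] <;> field_simp

theorem exists_hyperbolaMatrix_conicSet_eq (h2 : (2 : F) ≠ 0) {M : Matrix (Fin 3) (Fin 3) F}
    (hM : M.IsSymm) (hdet : IsUnit M.det) (h00 : M 0 0 = 0) (h11 : M 1 1 = 0) :
    ∃ (a b : F) (k : Fˣ), conicSet (hyperbolaMatrix a b k) = conicSet M := by
  have h01 : M 0 1 ≠ 0 := by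
    intro h01
    apply hdet.ne_zero
    simp [Matrix.det_fin_three, h00, h11, h01, hM.apply 0 1]
  obtain ⟨a, b, k, hscale⟩ : ∃ a b k, (M 0 1)⁻¹ • M = hyperbolaMatrix a b k :=
    ⟨_, _, _, smul_eq_hyperbolaMatrix h2 hM h00 h11 h01⟩
  have hk : 2 * k ≠ 0 := by
    rw [← det_hyperbolaMatrix a b k, ← hscale, det_smul]
    exact mul_ne_zero (by simpa using h01) hdet.ne_zero
  refine ⟨a, b, Units.mk0 k (right_ne_zero_of_mul hk), ?_⟩
  rw [Units.val_mk0, ← hscale, conicSet_smul (inv_ne_zero h01)]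

def hyperbolaConic (p : F × F × Fˣ) : Set (Projectivization F (Fin 3 → F)) :=
  conicSet (hyperbolaMatrix p.1 p.2.1 p.2.2)

theorem hyperbolaConic_injective (h2 : (2 : F) ≠ 0) :
    Function.Injective (hyperbolaConic (F := F)) := by
  rintro ⟨a, b, k⟩ ⟨a', b', k'⟩ h
  have key : ∀ x y, (x + a) * (y + b) = k ↔ (x + a') * (y + b') = k' := fun x y => by
    simpa only [hyperbolaConic, mk_affine_mem_conicSet_hyperbolaMatrix_iff h2] using
      Set.ext_iff.mp h (Projectivization.mk F ![x, y, 1] (by simp))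
  have ha : a = a' := by
    by_contra hne
    have hne : a - a' ≠ 0 := sub_ne_zero.mpr hne
    have := (key (-a') (k / (a - a') - b)).1 (by field_simp; ring)
    simp [eq_comm] at this
  have hb : b = b' := by
    by_contra hne
    have hne : b - b' ≠ 0 := sub_ne_zero.mpr hne
    have := (key (k / (b - b') - a) (-b')).1 (by field_simp; ring)
    simp [eq_comm] at this
  subst ha hb
  have hk : k = k' := Units.ext (by simpa using (key (1 - a) (k - b)).1 (by ring))
  rw [hk]

theorem isProperConic_through_iff (h2 : (2 : F) ≠ 0) (S : Set (Projectivization F (Fin 3 → F))) :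
    (IsProperConic S ∧ Projectivization.mk F ![1, 0, 0] (by simp) ∈ S ∧
        Projectivization.mk F ![0, 1, 0] (by simp) ∈ S) ↔ S ∈ Set.range hyperbolaConic := by
  constructor
  · rintro ⟨⟨M, hM, hdet, rfl⟩, h₁, h₂⟩
    simp only [mk_mem_conicSet_iff] at h₁ h₂
    obtain ⟨a, b, k, h⟩ := exists_hyperbolaMatrix_conicSet_eq h2 hM hdet
      (by simpa [Matrix.mulVec, dotProduct, Fin.sum_univ_three] using h₁)
      (by simpa [Matrix.mulVec, dotProduct, Fin.sum_univ_three] using h₂)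
    exact ⟨(a, b, k), h⟩
  · rintro ⟨⟨a, b, k⟩, rfl⟩
    refine ⟨⟨_, hyperbolaMatrix_isSymm a b k, ?_, rfl⟩, ?_, ?_⟩
    · simp [det_hyperbolaMatrix, h2]
    all_goals rw [hyperbolaConic, mk_mem_conicSet_iff, dotProduct_mulVec_hyperbolaMatrix]; simp

end Conics

theorem two_ne_zero_of_odd_card {F : Type} [Field F] [Fintype F] (hq : Odd (Fintype.card F)) :
    (2 : F) ≠ 0 :=
  Ring.two_ne_zero fun h => by
    have := FiniteField.even_card_of_char_two h
    rw [Nat.odd_iff] at hq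
    omega

/-- In `PG(2,q)`, `q` an odd prime power, there are exactly `q^2 * (q-1)` proper conics
through the two points `[1,0,0]` and `[0,1,0]`. -/
theorem num_proper_conics_through_two_points
    (F : Type) [Field F] [Fintype F] (hq : Odd (Fintype.card F)) :
    {S : Set (Projectivization F (Fin 3 → F)) | IsProperConic S ∧
        Projectivization.mk F (![1, 0, 0] : Fin 3 → F)
          (by intro h; simpa using congrFun h 0) ∈ S ∧
        Projectivization.mk F (![0, 1, 0] : Fin 3 → F)
          (by intro h; simpa using congrFun h 1) ∈ S}.ncard
      = Fintype.card F ^ 2 * (Fintype.card F - 1) := by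
  have h2 := two_ne_zero_of_odd_card hq
  have hcard : Nat.card (F × F × Fˣ) = Fintype.card F ^ 2 * (Fintype.card F - 1) := by
    simp [Nat.card_prod, Nat.card_units]
    ring
  rw [← hcard, ← Set.ncard_range_of_injective (hyperbolaConic_injective h2)]
  exact congrArg Set.ncard (Set.ext (isProperConic_through_iff h2))
end

section
/- In PG(2,q) with q an odd prime power, for any fixed proper conic C, there are exactly binom(q+1,4)·(q-3) proper conics intersecting C in exactly four points. -/
open Matrix

/-!
Every proper conic is projectively equivalent to the standard conic `xz = y²`: Chevalley–Warning
gives an isotropic vector, which extends to a hyperbolic pair and an orthogonal anisotropic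
vector. The standard conic is the image of `ℙ¹` under the Veronese map `[s : t] ↦ [s² : st : t²]`,
so a proper conic has `q + 1` points, any three of them independent. Hence any four of its points
can be moved to the standard frame `e₁, e₂, e₃, e₁ + e₂ + e₃`. The conics through the frame form
the pencil `d xy + f xz - (d + f) yz`, which has `q - 2` proper members, and a point off the frame
picks out a single member. So two proper conics sharing five points coincide, and every
`4`-subset `T` of `C` lies on exactly `q - 3` proper conics `S ≠ C`, each with `S ∩ C = T`.
Summing over the `binom(q+1, 4)` subsets `T` gives the count.
-/

open Projectivization
open scoped Pointwise LinearAlgebra.Projectivization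

theorem Set.ncard_eq_ncard_mul_of_mapsTo {α β : Type*} [Finite α] [Finite β] {s : Set α}
    {t : Set β} {f : α → β} (hf : Set.MapsTo f s t) {n : ℕ}
    (hn : ∀ b ∈ t, {a ∈ s | f a = b}.ncard = n) : s.ncard = t.ncard * n := by
  classical
  have := Fintype.ofFinite α
  have := Fintype.ofFinite β
  rw [Set.ncard_eq_toFinset_card' s, Set.ncard_eq_toFinset_card' t,
    Finset.card_eq_sum_card_fiberwise (f := f) (t := t.toFinset) (by simpa using hf),
    Finset.sum_congr rfl (g := fun _ => n), Finset.sum_const, smul_eq_mul]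
  intro b hb
  rw [← hn b (by simpa using hb), Set.ncard_eq_toFinset_card']
  congr 1
  ext
  simp

theorem Matrix.IsSymm.dotProduct_mulVec_comm {n R : Type*} [Fintype n] [CommSemiring R]
    {M : Matrix n n R} (hM : M.IsSymm) (v w : n → R) : v ⬝ᵥ M *ᵥ w = w ⬝ᵥ M *ᵥ v := by
  rw [dotProduct_mulVec, ← mulVec_transpose, hM.eq, dotProduct_comm]

theorem Matrix.mul_mul_transpose_apply {n R : Type*} [Fintype n] [CommSemiring R]
    (A M : Matrix n n R) (i j : n) : (A * M * Aᵀ) i j = A i ⬝ᵥ M *ᵥ A j := by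
  simp only [mul_apply, transpose_apply, dotProduct, mulVec, Finset.sum_mul, Finset.mul_sum]
  rw [Finset.sum_comm]
  exact Finset.sum_congr rfl fun _ _ => Finset.sum_congr rfl fun _ _ => by ring

variable {F : Type} [Field F]

/-! ### Conics under projectivities -/

theorem mem_conicSet_mk {M : Matrix (Fin 3) (Fin 3) F} {v : Fin 3 → F} (hv : v ≠ 0) :
    mk F v hv ∈ conicSet M ↔ v ⬝ᵥ M *ᵥ v = 0 := by
  obtain ⟨a, ha⟩ := exists_smul_eq_mk_rep F v hv
  rw [conicSet, Set.mem_ofPred_eq, ← ha, Units.smul_def, mulVec_smul, dotProduct_smul,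
    smul_dotProduct, smul_eq_mul, smul_eq_mul, mul_eq_zero, mul_eq_zero]
  simp [a.ne_zero]

theorem conicSet_smul_of_ne_zero {c : F} (hc : c ≠ 0) (M : Matrix (Fin 3) (Fin 3) F) :
    conicSet (c • M) = conicSet M := by
  ext p
  simp [conicSet, smul_mulVec, hc]

theorem inv_smul_conicSet (g : GL (Fin 3) F) (M : Matrix (Fin 3) (Fin 3) F) :
    g⁻¹ • conicSet M =
      conicSet ((g : Matrix (Fin 3) (Fin 3) F)ᵀ * M * (g : Matrix (Fin 3) (Fin 3) F)) := by
  ext p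
  induction p using Projectivization.ind with
  | h v hv =>
    rw [Set.mem_smul_set_iff_inv_smul_mem, inv_inv, smul_mk, mem_conicSet_mk, mem_conicSet_mk,
      Matrix.mul_assoc, ← mulVec_mulVec, ← mulVec_mulVec, dotProduct_mulVec v, vecMul_transpose]
    rfl

theorem IsProperConic.smul {S : Set (ℙ F (Fin 3 → F))} (hS : IsProperConic S)
    (g : GL (Fin 3) F) : IsProperConic (g • S) := by
  obtain ⟨M, hM, hdet, rfl⟩ := hS
  rw [← inv_inv g, inv_smul_conicSet]
  refine ⟨_, ?_, ?_, rfl⟩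
  · simp [IsSymm, transpose_mul, hM.eq, Matrix.mul_assoc]
  · simpa [det_mul, g.det_ne_zero] using hdet

theorem isProperConic_smul_iff {S : Set (ℙ F (Fin 3 → F))} (g : GL (Fin 3) F) :
    IsProperConic (g • S) ↔ IsProperConic S :=
  ⟨fun h => by simpa using h.smul g⁻¹, fun h => h.smul g⟩

def properConicsThrough (T : Set (ℙ F (Fin 3 → F))) : Set (Set (ℙ F (Fin 3 → F))) :=
  {S | IsProperConic S ∧ T ⊆ S}

theorem properConicsThrough_smul (g : GL (Fin 3) F) (T : Set (ℙ F (Fin 3 → F))) :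
    properConicsThrough (g • T) = g • properConicsThrough T := by
  ext S
  rw [Set.mem_smul_set_iff_inv_smul_mem]
  simp only [properConicsThrough, Set.mem_ofPred_eq, isProperConic_smul_iff,
    ← Set.smul_set_subset_iff_subset_inv_smul_set]

/-! ### The normal form of a proper conic -/

theorem exists_ne_zero_dotProduct_mulVec_self_eq_zero [Fintype F] {n : Type*} [Fintype n]
    (hn : 2 < Fintype.card n) (M : Matrix n n F) : ∃ v : n → F, v ≠ 0 ∧ v ⬝ᵥ M *ᵥ v = 0 := by
  classical
  let f : MvPolynomial n F :=
    ∑ i, ∑ j, MvPolynomial.C (M i j) * MvPolynomial.X i * MvPolynomial.X j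
  have hf : f.IsHomogeneous 2 :=
    .sum _ _ _ fun i _ => .sum _ _ _ fun j _ =>
      ((MvPolynomial.isHomogeneous_C _ _).mul (MvPolynomial.isHomogeneous_X _ i)).mul
        (MvPolynomial.isHomogeneous_X _ j)
  have heval (x : n → F) : MvPolynomial.eval x f = x ⬝ᵥ M *ᵥ x := by
    simp only [f, map_sum, map_mul, MvPolynomial.eval_C, MvPolynomial.eval_X, dotProduct,
      mulVec, Finset.mul_sum]
    exact Finset.sum_congr rfl fun _ _ => Finset.sum_congr rfl fun _ _ => by ring
  obtain ⟨p, _⟩ := CharP.exists F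
  have hdvd := char_dvd_card_solutions p (hf.totalDegree_le.trans_lt hn)
  have h0 : MvPolynomial.eval 0 f = 0 := by rw [heval]; simp
  have hcard : 1 < Fintype.card {x : n → F // MvPolynomial.eval x f = 0} :=
    (CharP.char_is_prime F p).one_lt.trans_le
      (Nat.le_of_dvd (Fintype.card_pos_iff.2 ⟨⟨0, h0⟩⟩) hdvd)
  obtain ⟨⟨x, hx⟩, hx0⟩ := Fintype.exists_ne_of_one_lt_card hcard ⟨0, h0⟩
  exact ⟨x, fun h => hx0 (Subtype.ext h), heval x ▸ hx⟩

theorem exists_hyperbolic_partner {n : Type*} [Fintype n] [DecidableEq n] (h2 : (2 : F) ≠ 0)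
    {M : Matrix n n F} (hM : M.IsSymm) {v : n → F} (hv : v ⬝ᵥ M *ᵥ v = 0) (hMv : M *ᵥ v ≠ 0) :
    ∃ w : n → F, v ⬝ᵥ M *ᵥ w = 1 ∧ w ⬝ᵥ M *ᵥ w = 0 := by
  obtain ⟨i, hi⟩ := Function.ne_iff.1 hMv
  set s := v ⬝ᵥ M *ᵥ Pi.single i 1 with hs
  have hs0 : s ≠ 0 := by
    rwa [hs, dotProduct_mulVec, dotProduct_single, mul_one, ← mulVec_transpose, hM.eq]
  set w₁ := s⁻¹ • Pi.single i (1 : F)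
  have hvw₁ : v ⬝ᵥ M *ᵥ w₁ = 1 := by
    rw [mulVec_smul, dotProduct_smul, ← hs, smul_eq_mul, inv_mul_cancel₀ hs0]
  refine ⟨w₁ - (w₁ ⬝ᵥ M *ᵥ w₁ / 2) • v, ?_, ?_⟩
  · simp [mulVec_sub, mulVec_smul, dotProduct_sub, hv, hvw₁]
  · simp only [mulVec_sub, mulVec_smul, dotProduct_sub, sub_dotProduct, dotProduct_smul,
      smul_dotProduct, smul_eq_mul, hv, hvw₁, hM.dotProduct_mulVec_comm w₁ v]
    field_simp
    ring

theorem linearIndependent_of_hyperbolic_pair {n : Type*} [Fintype n] {M : Matrix n n F}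
    (hM : M.IsSymm) {v w : n → F} (hv : v ⬝ᵥ M *ᵥ v = 0) (hvw : v ⬝ᵥ M *ᵥ w = 1)
    (hw : w ⬝ᵥ M *ᵥ w = 0) : LinearIndependent F ![v, w] := by
  refine LinearIndependent.pair_iff.2 fun a b hab => ?_
  have hw' := congrArg (· ⬝ᵥ M *ᵥ w) hab
  have hv' := congrArg (· ⬝ᵥ M *ᵥ v) hab
  simp only [add_dotProduct, smul_dotProduct, smul_eq_mul, zero_dotProduct, hv, hvw, hw,
    hM.dotProduct_mulVec_comm w v] at hw' hv'
  exact ⟨by linear_combination hw', by linear_combination hv'⟩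

theorem exists_orthogonal_anisotropic_of_hyperbolic_pair {M : Matrix (Fin 3) (Fin 3) F}
    (hM : M.IsSymm) (hdet : IsUnit M.det) {v w : Fin 3 → F} (hv : v ⬝ᵥ M *ᵥ v = 0)
    (hvw : v ⬝ᵥ M *ᵥ w = 1) (hw : w ⬝ᵥ M *ᵥ w = 0) :
    ∃ z : Fin 3 → F, v ⬝ᵥ M *ᵥ z = 0 ∧ w ⬝ᵥ M *ᵥ z = 0 ∧ z ⬝ᵥ M *ᵥ z ≠ 0 := by
  set z := M⁻¹ *ᵥ (v ⨯₃ w) with hz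
  have hMz : M *ᵥ z = v ⨯₃ w := by
    rw [hz, mulVec_mulVec, mul_nonsing_inv _ hdet, one_mulVec]
  have hz0 : z ≠ 0 := fun h => by
    rw [h, mulVec_zero] at hMz
    exact crossProduct_ne_zero_iff_linearIndependent.2
      (linearIndependent_of_hyperbolic_pair hM hv hvw hw) hMz.symm
  have hvz : v ⬝ᵥ M *ᵥ z = 0 := by rw [hMz, dot_self_cross]
  have hwz : w ⬝ᵥ M *ᵥ z = 0 := by rw [hMz, dot_cross_self]
  refine ⟨z, hvz, hwz, fun ht => ?_⟩
  -- if `z` were isotropic, `v, w, z` would be dependent; pairing a relation with `w` and `v`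
  -- kills the coefficients of `v` and `w`
  have hdet0 : Matrix.det ![v, w, z] = 0 := by
    rw [← triple_product_eq_det, triple_product_permutation, triple_product_permutation, ← hMz,
      ht]
  obtain ⟨c, hc0, hc⟩ := exists_vecMul_eq_zero_iff.2 hdet0
  have hcomb : c 0 • v + c 1 • w + c 2 • z = 0 := by
    rw [← hc]; ext j; simp [vecMul, dotProduct, Fin.sum_univ_three]
  have hw' := congrArg (· ⬝ᵥ M *ᵥ w) hcomb
  have hv' := congrArg (· ⬝ᵥ M *ᵥ v) hcomb
  simp only [add_dotProduct, smul_dotProduct, smul_eq_mul, zero_dotProduct, hv, hvw, hw,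
    hM.dotProduct_mulVec_comm w v, hM.dotProduct_mulVec_comm z v, hM.dotProduct_mulVec_comm z w,
    hvz, hwz] at hw' hv'
  have hc₀ : c 0 = 0 := by linear_combination hw'
  have hc₁ : c 1 = 0 := by linear_combination hv'
  rw [hc₀, hc₁, zero_smul, zero_smul, zero_add, zero_add, smul_eq_zero] at hcomb
  apply hc0
  ext i; fin_cases i
  · exact hc₀
  · exact hc₁
  · exact hcomb.resolve_right hz0

def standardConicMatrix (F : Type) [Field F] : Matrix (Fin 3) (Fin 3) F :=
  !![0, 0, 1; 0, -2, 0; 1, 0, 0]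

def standardConic (F : Type) [Field F] : Set (ℙ F (Fin 3 → F)) :=
  conicSet (standardConicMatrix F)

theorem det_standardConicMatrix : (standardConicMatrix F).det = 2 := by
  simp [standardConicMatrix, det_fin_three]

theorem dotProduct_standardConicMatrix_mulVec (v : Fin 3 → F) :
    v ⬝ᵥ standardConicMatrix F *ᵥ v = 2 * (v 0 * v 2 - v 1 ^ 2) := by
  simp only [dotProduct, mulVec, standardConicMatrix, Fin.sum_univ_three, of_apply, cons_val_zero,
    cons_val_one, cons_val_two, head_cons, tail_cons]
  ring

theorem exists_transpose_mul_mul_eq_smul_standardConicMatrix [Fintype F] (h2 : (2 : F) ≠ 0)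
    {M : Matrix (Fin 3) (Fin 3) F} (hM : M.IsSymm) (hdet : IsUnit M.det) :
    ∃ g : GL (Fin 3) F, ∃ c : F, c ≠ 0 ∧
      (g : Matrix (Fin 3) (Fin 3) F)ᵀ * M * (g : Matrix (Fin 3) (Fin 3) F) =
        c • standardConicMatrix F := by
  have hinj : Function.Injective M.mulVec :=
    mulVec_injective_iff_isUnit.2 ((isUnit_iff_isUnit_det M).2 hdet)
  obtain ⟨v, hv0, hv⟩ := exists_ne_zero_dotProduct_mulVec_self_eq_zero (by simp) M
  obtain ⟨w, hvw, hw⟩ := exists_hyperbolic_partner h2 hM hv (by simpa using hinj.ne hv0)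
  obtain ⟨z, hvz, hwz, ht⟩ := exists_orthogonal_anisotropic_of_hyperbolic_pair hM hdet hv hvw hw
  set t := z ⬝ᵥ M *ᵥ z with ht_def
  -- in the basis `(-t/2) v, z, w` the form is `-t/2 · (2xz - 2y²)`
  set R : Matrix (Fin 3) (Fin 3) F := ![(-t / 2) • v, z, w]
  have hR : R * M * Rᵀ = (-t / 2) • standardConicMatrix F := by
    ext i j
    rw [mul_mul_transpose_apply]
    fin_cases i <;> fin_cases j <;>
      simp [R, standardConicMatrix, mulVec_smul, hv, hvw, hw, hvz, hwz, ← ht_def,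
        hM.dotProduct_mulVec_comm w v, hM.dotProduct_mulVec_comm z v,
        hM.dotProduct_mulVec_comm z w]
    field_simp
  have hc : -t / 2 ≠ 0 := div_ne_zero (neg_ne_zero.2 ht) h2
  have hRdet : Rᵀ.det ≠ 0 := by
    have := congrArg det hR
    rw [det_mul, det_mul, det_transpose, det_smul, det_standardConicMatrix] at this
    rw [det_transpose]
    intro h
    rw [h, zero_mul, zero_mul] at this
    exact mul_ne_zero (pow_ne_zero _ hc) h2 this.symm
  exact ⟨GeneralLinearGroup.mkOfDetNeZero Rᵀ hRdet, -t / 2, hc, by simpa using hR⟩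

theorem IsProperConic.exists_eq_smul_standardConic [Fintype F] (h2 : (2 : F) ≠ 0)
    {C : Set (ℙ F (Fin 3 → F))} (hC : IsProperConic C) :
    ∃ g : GL (Fin 3) F, C = g • standardConic F := by
  obtain ⟨M, hM, hdet, rfl⟩ := hC
  obtain ⟨g, c, hc, hg⟩ := exists_transpose_mul_mul_eq_smul_standardConicMatrix h2 hM hdet
  refine ⟨g, ?_⟩
  rw [← inv_smul_eq_iff, inv_smul_conicSet, hg, conicSet_smul_of_ne_zero hc, standardConic]

/-! ### The standard conic as the Veronese image of `ℙ¹` -/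

/-- Homogeneous coordinates on `ℙ¹(F) = F ∪ {∞}`, with `none` playing the role of `∞`. -/
def projLineCoords : Option F → F × F
  | none => (0, 1)
  | some t => (1, t)

def projLineDet (o o' : Option F) : F :=
  (projLineCoords o).1 * (projLineCoords o').2 - (projLineCoords o').1 * (projLineCoords o).2

theorem projLineDet_ne_zero {o o' : Option F} (h : o ≠ o') : projLineDet o o' ≠ 0 := by
  cases o <;> cases o' <;> simp_all [projLineDet, projLineCoords, sub_eq_zero, eq_comm]

/-- The Veronese map `[s : t] ↦ [s² : st : t²]`. -/
def conicParamVec (o : Option F) : Fin 3 → F :=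
  ![(projLineCoords o).1 ^ 2, (projLineCoords o).1 * (projLineCoords o).2,
    (projLineCoords o).2 ^ 2]

theorem conicParamVec_ne_zero (o : Option F) : conicParamVec o ≠ 0 := by
  cases o <;> simp [conicParamVec, projLineCoords, funext_iff, Fin.forall_fin_succ]

def conicPoint (o : Option F) : ℙ F (Fin 3 → F) :=
  mk F (conicParamVec o) (conicParamVec_ne_zero o)

theorem standardConic_eq_range_conicPoint (h2 : (2 : F) ≠ 0) :
    standardConic F = Set.range (conicPoint (F := F)) := by
  ext p
  induction p using Projectivization.ind with
  | h v hv =>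
    rw [standardConic, mem_conicSet_mk, dotProduct_standardConicMatrix_mulVec, mul_eq_zero,
      or_iff_right h2, sub_eq_zero]
    constructor
    · intro hv2
      by_cases hv0 : v 0 = 0
      · have hv1 : v 1 = 0 := pow_eq_zero_iff two_ne_zero |>.1 (by rw [← hv2, hv0, zero_mul])
        have hv2 : v 2 ≠ 0 := fun h => hv (by ext i; fin_cases i <;> simp [*])
        refine ⟨none, (mk_eq_mk_iff' _ _ _ _ _).2 ⟨(v 2)⁻¹, ?_⟩⟩
        ext i; fin_cases i <;> simp [conicParamVec, projLineCoords, hv0, hv1, hv2]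
      · refine ⟨some (v 1 / v 0), (mk_eq_mk_iff' _ _ _ _ _).2 ⟨(v 0)⁻¹, ?_⟩⟩
        ext i; fin_cases i <;> simp [conicParamVec, projLineCoords] <;> field_simp
        linear_combination hv2
    · rintro ⟨o, ho⟩
      obtain ⟨a, ha⟩ := (mk_eq_mk_iff' _ _ _ _ _).1 ho.symm
      rw [← ha]
      simp only [conicParamVec, Fin.isValue, Pi.smul_apply, cons_val_zero, smul_eq_mul, cons_val,
        cons_val_one]
      ring

theorem det_conicParamVec (o₁ o₂ o₃ : Option F) :
    (of ![conicParamVec o₁, conicParamVec o₂, conicParamVec o₃]).det =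
      projLineDet o₁ o₂ * projLineDet o₁ o₃ * projLineDet o₂ o₃ := by
  rw [det_fin_three]
  simp only [conicParamVec, projLineDet, of_apply, cons_val_zero, cons_val_one, cons_val_two,
    head_cons, tail_cons]
  ring

theorem conicPoint_injective : Function.Injective (conicPoint (F := F)) := by
  intro o o' h
  by_contra hne
  obtain ⟨a, ha⟩ := (mk_eq_mk_iff' _ _ _ _ _).1 h
  have h₀ := congrFun ha 0
  have h₁ := congrFun ha 1
  have h₂ := congrFun ha 2
  simp only [conicParamVec, Pi.smul_apply, smul_eq_mul, cons_val_zero, cons_val_one,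
    cons_val_two, head_cons, tail_cons] at h₀ h₁ h₂
  apply projLineDet_ne_zero hne
  apply pow_eq_zero_iff two_ne_zero |>.1
  rw [projLineDet]
  linear_combination -(projLineCoords o').2 ^ 2 * h₀ +
    2 * (projLineCoords o').1 * (projLineCoords o').2 * h₁ - (projLineCoords o').1 ^ 2 * h₂

theorem ncard_standardConic [Fintype F] (h2 : (2 : F) ≠ 0) :
    (standardConic F).ncard = Fintype.card F + 1 := by
  rw [standardConic_eq_range_conicPoint h2, Set.ncard_range_of_injective conicPoint_injective,
    Nat.card_eq_fintype_card, Fintype.card_option]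

theorem IsProperConic.ncard_eq [Fintype F] (h2 : (2 : F) ≠ 0) {C : Set (ℙ F (Fin 3 → F))}
    (hC : IsProperConic C) : C.ncard = Fintype.card F + 1 := by
  obtain ⟨g, rfl⟩ := hC.exists_eq_smul_standardConic h2
  rw [Set.ncard_smul_set, ncard_standardConic h2]

theorem independent_conicPoint {o₁ o₂ o₃ : Option F} (h₁₂ : o₁ ≠ o₂) (h₁₃ : o₁ ≠ o₃)
    (h₂₃ : o₂ ≠ o₃) : Independent ![conicPoint o₁, conicPoint o₂, conicPoint o₃] := by
  have hdet : (of ![conicParamVec o₁, conicParamVec o₂, conicParamVec o₃]).det ≠ 0 := by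
    rw [det_conicParamVec]
    exact mul_ne_zero (mul_ne_zero (projLineDet_ne_zero h₁₂) (projLineDet_ne_zero h₁₃))
      (projLineDet_ne_zero h₂₃)
  have hne (i : Fin 3) : ![conicParamVec o₁, conicParamVec o₂, conicParamVec o₃] i ≠ 0 := by
    fin_cases i <;> exact conicParamVec_ne_zero _
  convert Independent.mk _ hne (linearIndependent_rows_of_det_ne_zero hdet) using 1
  ext i; fin_cases i <;> rfl

/-! ### The standard frame and the pencil of conics through it -/

def standardFrame (F : Type) [Field F] : Set (ℙ F (Fin 3 → F)) :=
  {mk F ![1, 0, 0] (by simp), mk F ![0, 1, 0] (by simp), mk F ![0, 0, 1] (by simp),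
    mk F ![1, 1, 1] (by simp)}

theorem ncard_standardFrame_le : (standardFrame F).ncard ≤ 4 := by
  refine (Set.ncard_insert_le _ _).trans ?_
  refine Nat.succ_le_succ ((Set.ncard_insert_le _ _).trans ?_)
  refine Nat.succ_le_succ ((Set.ncard_insert_le _ _).trans ?_)
  rw [Set.ncard_singleton]

theorem det_ne_zero_of_independent {p₁ p₂ p₃ : ℙ F (Fin 3 → F)}
    (h : Independent ![p₁, p₂, p₃]) : (of ![p₁.rep, p₂.rep, p₃.rep]).det ≠ 0 := by
  rw [independent_iff] at h
  refine ((isUnit_iff_isUnit_det _).1 (linearIndependent_rows_iff_isUnit.1 ?_)).ne_zero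
  convert h using 1
  · ext i; fin_cases i <;> rfl
  · rfl

theorem det_of_smul_add_smul_add_smul (u v w : Fin 3 → F) (a b c : F) :
    (of ![u, v, a • w + b • u + c • v]).det = a * (of ![u, v, w]).det := by
  simp only [det_fin_three, of_apply, cons_val_zero, cons_val_one, cons_val_two, head_cons,
    tail_cons, Pi.add_apply, Pi.smul_apply, smul_eq_mul]
  ring

theorem exists_rep_eq_sum_of_independent {p₁ p₂ p₃ p₄ : ℙ F (Fin 3 → F)}
    (h₁₂₃ : Independent ![p₁, p₂, p₃]) (h₁₂₄ : Independent ![p₁, p₂, p₄])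
    (h₁₃₄ : Independent ![p₁, p₃, p₄]) (h₂₃₄ : Independent ![p₂, p₃, p₄]) :
    ∃ a : Fin 3 → F, a 0 ≠ 0 ∧ a 1 ≠ 0 ∧ a 2 ≠ 0 ∧
      p₄.rep = a 0 • p₁.rep + a 1 • p₂.rep + a 2 • p₃.rep := by
  set P : Matrix (Fin 3) (Fin 3) F := (of ![p₁.rep, p₂.rep, p₃.rep])ᵀ
  have hP : IsUnit P.det := by
    rw [det_transpose, isUnit_iff_ne_zero]; exact det_ne_zero_of_independent h₁₂₃
  set a := P⁻¹ *ᵥ p₄.rep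
  have hsum : p₄.rep = a 0 • p₁.rep + a 1 • p₂.rep + a 2 • p₃.rep := by
    have : P *ᵥ a = p₄.rep := by rw [mulVec_mulVec, mul_nonsing_inv _ hP, one_mulVec]
    rw [← this]
    ext j
    simp only [P, mulVec, dotProduct, Fin.sum_univ_three, transpose_apply, of_apply,
      cons_val_zero, cons_val_one, cons_val_two, head_cons, tail_cons, Pi.add_apply,
      Pi.smul_apply, smul_eq_mul]
    ring
  refine ⟨a, ?_, ?_, ?_, hsum⟩
  · have h := det_of_smul_add_smul_add_smul p₂.rep p₃.rep p₁.rep (a 0) (a 1) (a 2)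
    rw [← hsum] at h
    exact left_ne_zero_of_mul (h ▸ det_ne_zero_of_independent h₂₃₄)
  · have h := det_of_smul_add_smul_add_smul p₁.rep p₃.rep p₂.rep (a 1) (a 0) (a 2)
    rw [show a 1 • p₂.rep + a 0 • p₁.rep + a 2 • p₃.rep = p₄.rep by rw [hsum]; abel] at h
    exact left_ne_zero_of_mul (h ▸ det_ne_zero_of_independent h₁₃₄)
  · have h := det_of_smul_add_smul_add_smul p₁.rep p₂.rep p₃.rep (a 2) (a 0) (a 1)
    rw [show a 2 • p₃.rep + a 0 • p₁.rep + a 1 • p₂.rep = p₄.rep by rw [hsum]; abel] at h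
    exact left_ne_zero_of_mul (h ▸ det_ne_zero_of_independent h₁₂₄)

theorem exists_smul_standardFrame_eq {p₁ p₂ p₃ p₄ : ℙ F (Fin 3 → F)}
    (h₁₂₃ : Independent ![p₁, p₂, p₃]) (h₁₂₄ : Independent ![p₁, p₂, p₄])
    (h₁₃₄ : Independent ![p₁, p₃, p₄]) (h₂₃₄ : Independent ![p₂, p₃, p₄]) :
    ∃ g : GL (Fin 3) F, g • standardFrame F = {p₁, p₂, p₃, p₄} := by
  obtain ⟨a, ha₀, ha₁, ha₂, hsum⟩ := exists_rep_eq_sum_of_independent h₁₂₃ h₁₂₄ h₁₃₄ h₂₃₄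
  set G := (of ![p₁.rep, p₂.rep, p₃.rep])ᵀ * diagonal a
  have hG : G.det ≠ 0 := by
    simp [G, det_mul, det_diagonal, Fin.prod_univ_three, det_ne_zero_of_independent h₁₂₃, ha₀,
      ha₁, ha₂]
  set g := GeneralLinearGroup.mkOfDetNeZero G hG
  have himg {e : Fin 3 → F} (he : e ≠ 0) {p : ℙ F (Fin 3 → F)} (c : F)
      (h : G *ᵥ e = c • p.rep) : g • mk F e he = p := by
    rw [smul_mk, ← mk_rep p, mk_eq_mk_iff']
    exact ⟨c, h.symm⟩
  refine ⟨g, ?_⟩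
  simp only [standardFrame, Set.smul_set_insert, Set.smul_set_singleton]
  rw [himg _ (a 0), himg _ (a 1), himg _ (a 2), himg _ 1]
  all_goals
    ext j; fin_cases j <;> simp [G, hsum, mulVec, dotProduct, Fin.sum_univ_three] <;> ring

theorem exists_smul_standardFrame_eq_of_subset_standardConic (h2 : (2 : F) ≠ 0)
    {T : Set (ℙ F (Fin 3 → F))} (hT : T ⊆ standardConic F) (hT4 : T.ncard = 4) :
    ∃ g : GL (Fin 3) F, g • standardFrame F = T := by
  obtain ⟨x₁, x₂, x₃, x₄, h₁₂, h₁₃, h₁₄, h₂₃, h₂₄, h₃₄, rfl⟩ := Set.ncard_eq_four.1 hT4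
  simp only [standardConic_eq_range_conicPoint h2, Set.insert_subset_iff,
    Set.singleton_subset_iff] at hT
  obtain ⟨⟨o₁, rfl⟩, ⟨o₂, rfl⟩, ⟨o₃, rfl⟩, ⟨o₄, rfl⟩⟩ := hT
  exact exists_smul_standardFrame_eq
    (independent_conicPoint (ne_of_apply_ne _ h₁₂) (ne_of_apply_ne _ h₁₃) (ne_of_apply_ne _ h₂₃))
    (independent_conicPoint (ne_of_apply_ne _ h₁₂) (ne_of_apply_ne _ h₁₄) (ne_of_apply_ne _ h₂₄))
    (independent_conicPoint (ne_of_apply_ne _ h₁₃) (ne_of_apply_ne _ h₁₄) (ne_of_apply_ne _ h₃₄))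
    (independent_conicPoint (ne_of_apply_ne _ h₂₃) (ne_of_apply_ne _ h₂₄) (ne_of_apply_ne _ h₃₄))

theorem IsProperConic.exists_smul_standardFrame_eq [Fintype F] (h2 : (2 : F) ≠ 0)
    {C T : Set (ℙ F (Fin 3 → F))} (hC : IsProperConic C) (hTC : T ⊆ C) (hT4 : T.ncard = 4) :
    ∃ g : GL (Fin 3) F, g • standardFrame F = T := by
  obtain ⟨g₀, rfl⟩ := hC.exists_eq_smul_standardConic h2
  obtain ⟨g, hg⟩ := exists_smul_standardFrame_eq_of_subset_standardConic h2
    (Set.subset_smul_set_iff.1 hTC) (by rwa [Set.ncard_smul_set])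
  exact ⟨g₀ * g, by rw [mul_smul, hg, smul_inv_smul]⟩

def frameConicMatrix (d f : F) : Matrix (Fin 3) (Fin 3) F :=
  !![0, d, f; d, 0, -d - f; f, -d - f, 0]

theorem frameConicMatrix_isSymm (d f : F) : (frameConicMatrix d f).IsSymm := by
  ext i j; fin_cases i <;> fin_cases j <;> rfl

theorem det_frameConicMatrix (d f : F) :
    (frameConicMatrix d f).det = 2 * d * f * (-d - f) := by
  simp only [frameConicMatrix, det_fin_three, of_apply, cons_val_zero, cons_val_one, cons_val_two,
    head_cons, tail_cons]
  ring

theorem smul_frameConicMatrix (c d f : F) :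
    c • frameConicMatrix d f = frameConicMatrix (c * d) (c * f) := by
  ext i j; fin_cases i <;> fin_cases j <;> simp [frameConicMatrix] <;> ring

theorem dotProduct_frameConicMatrix_mulVec (d f : F) (v : Fin 3 → F) :
    v ⬝ᵥ frameConicMatrix d f *ᵥ v =
      2 * (d * (v 1 * (v 0 - v 2)) + f * (v 2 * (v 0 - v 1))) := by
  simp only [dotProduct, mulVec, frameConicMatrix, Fin.sum_univ_three, of_apply, cons_val_zero,
    cons_val_one, cons_val_two, head_cons, tail_cons]
  ring

theorem standardFrame_subset_conicSet_frameConicMatrix (d f : F) :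
    standardFrame F ⊆ conicSet (frameConicMatrix d f) := by
  simp only [standardFrame, Set.insert_subset_iff, Set.singleton_subset_iff, mem_conicSet_mk,
    dotProduct_frameConicMatrix_mulVec]
  simp

theorem eq_frameConicMatrix_of_standardFrame_subset (h2 : (2 : F) ≠ 0)
    {N : Matrix (Fin 3) (Fin 3) F} (hN : N.IsSymm) (h : standardFrame F ⊆ conicSet N) :
    N = frameConicMatrix (N 0 1) (N 0 2) := by
  have hsymm (i j : Fin 3) : N j i = N i j := hN.apply i j
  simp only [standardFrame, Set.insert_subset_iff, Set.singleton_subset_iff, mem_conicSet_mk,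
    mulVec, dotProduct, Fin.sum_univ_three] at h
  simp only [cons_val_zero, cons_val_one, cons_val_two, head_cons, tail_cons, mul_one, mul_zero,
    one_mul, zero_mul, add_zero, zero_add, hsymm 0 1, hsymm 0 2, hsymm 1 2] at h
  obtain ⟨h00, h11, h22, hsum⟩ := h
  have h12 : N 1 2 = -N 0 1 - N 0 2 :=
    mul_left_cancel₀ h2 (by linear_combination hsum - h00 - h11 - h22)
  ext i j
  fin_cases i <;> fin_cases j <;>
    simp [frameConicMatrix, h00, h11, h22, h12, hsymm 0 1, hsymm 0 2, hsymm 1 2]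

theorem isProperConic_conicSet_frameConicMatrix (h2 : (2 : F) ≠ 0) {d : F} (hd₀ : d ≠ 0)
    (hd₁ : d ≠ -1) : IsProperConic (conicSet (frameConicMatrix d 1)) := by
  refine ⟨_, frameConicMatrix_isSymm d 1, ?_, rfl⟩
  rw [det_frameConicMatrix, isUnit_iff_ne_zero]
  have : -d - 1 ≠ 0 := fun h => hd₁ (by linear_combination -h)
  simp [h2, hd₀, this]

theorem IsProperConic.exists_eq_conicSet_frameConicMatrix (h2 : (2 : F) ≠ 0)
    {S : Set (ℙ F (Fin 3 → F))} (hS : IsProperConic S) (hfS : standardFrame F ⊆ S) :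
    ∃ d : F, d ≠ 0 ∧ d ≠ -1 ∧ S = conicSet (frameConicMatrix d 1) := by
  obtain ⟨N, hN, hdet, rfl⟩ := hS
  have hNeq := eq_frameConicMatrix_of_standardFrame_subset h2 hN hfS
  set d := N 0 1
  set f := N 0 2
  rw [hNeq, det_frameConicMatrix, isUnit_iff_ne_zero] at hdet
  have hd : d ≠ 0 := by rintro h; simp [h] at hdet
  have hf : f ≠ 0 := by rintro h; simp [h] at hdet
  have hdf : -d - f ≠ 0 := by rintro h; simp [h] at hdet
  refine ⟨f⁻¹ * d, mul_ne_zero (inv_ne_zero hf) hd, fun h => hdf ?_, ?_⟩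
  · field_simp at h
    linear_combination -h
  · rw [hNeq, ← conicSet_smul_of_ne_zero (inv_ne_zero hf), smul_frameConicMatrix,
      inv_mul_cancel₀ hf]

theorem mk_mem_standardFrame {v : Fin 3 → F} (hv : v ≠ 0) (hA : v 1 * (v 0 - v 2) = 0)
    (hB : v 2 * (v 0 - v 1) = 0) : mk F v hv ∈ standardFrame F := by
  have hmk {e : Fin 3 → F} (he : e ≠ 0) (a : F) (h : v = a • e) : mk F v hv = mk F e he :=
    (mk_eq_mk_iff' _ _ _ _ _).2 ⟨a, h.symm⟩
  simp only [standardFrame, Set.mem_insert_iff, Set.mem_singleton_iff]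
  rcases mul_eq_zero.1 hA with h1 | h02
  · rcases mul_eq_zero.1 hB with h2 | h01
    · left; exact hmk _ (v 0) (by ext i; fin_cases i <;> simp [h1, h2])
    · right; right; left
      exact hmk _ (v 2) (by ext i; fin_cases i <;> simp [h1, sub_eq_zero.1 h01])
  · rcases mul_eq_zero.1 hB with h2 | h01
    · right; left
      exact hmk _ (v 1) (by ext i; fin_cases i <;> simp [h2, sub_eq_zero.1 h02])
    · right; right; right
      exact hmk _ (v 0) (by ext i; fin_cases i <;> simp [← sub_eq_zero.1 h01, ← sub_eq_zero.1 h02])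

theorem mul_eq_mul_of_mem_conicSet_frameConicMatrix (h2 : (2 : F) ≠ 0)
    {p : ℙ F (Fin 3 → F)} (hp : p ∉ standardFrame F) {d f d' f' : F}
    (h : p ∈ conicSet (frameConicMatrix d f)) (h' : p ∈ conicSet (frameConicMatrix d' f')) :
    d * f' = d' * f := by
  induction p using Projectivization.ind with
  | h v hv =>
    rw [mem_conicSet_mk, dotProduct_frameConicMatrix_mulVec, mul_eq_zero, or_iff_right h2] at h h'
    by_cases hA : v 1 * (v 0 - v 2) = 0
    · have hB : v 2 * (v 0 - v 1) ≠ 0 := fun hB => hp (mk_mem_standardFrame hv hA hB)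
      exact mul_right_cancel₀ hB (by linear_combination (-d') * h + d * h')
    · exact mul_right_cancel₀ hA (by linear_combination f' * h - f * h')

theorem IsProperConic.eq_of_standardFrame_subset (h2 : (2 : F) ≠ 0)
    {S S' : Set (ℙ F (Fin 3 → F))} (hS : IsProperConic S) (hS' : IsProperConic S')
    (hfS : standardFrame F ⊆ S) (hfS' : standardFrame F ⊆ S') {p : ℙ F (Fin 3 → F)}
    (hp : p ∉ standardFrame F) (hpS : p ∈ S) (hpS' : p ∈ S') : S = S' := by
  obtain ⟨d, -, -, rfl⟩ := hS.exists_eq_conicSet_frameConicMatrix h2 hfS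
  obtain ⟨d', -, -, rfl⟩ := hS'.exists_eq_conicSet_frameConicMatrix h2 hfS'
  have := mul_eq_mul_of_mem_conicSet_frameConicMatrix h2 hp hpS hpS'
  rw [mul_one, mul_one] at this
  rw [this]

theorem properConicsThrough_standardFrame (h2 : (2 : F) ≠ 0) :
    properConicsThrough (standardFrame F) =
      (fun d => conicSet (frameConicMatrix d 1)) '' {d | d ≠ 0 ∧ d ≠ -1} := by
  ext S
  constructor
  · rintro ⟨hS, hfS⟩
    obtain ⟨d, hd₀, hd₁, rfl⟩ := hS.exists_eq_conicSet_frameConicMatrix h2 hfS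
    exact ⟨d, ⟨hd₀, hd₁⟩, rfl⟩
  · rintro ⟨d, ⟨hd₀, hd₁⟩, rfl⟩
    exact ⟨isProperConic_conicSet_frameConicMatrix h2 hd₀ hd₁,
      standardFrame_subset_conicSet_frameConicMatrix d 1⟩

theorem ncard_properConicsThrough_standardFrame [Fintype F] (h2 : (2 : F) ≠ 0) :
    (properConicsThrough (standardFrame F)).ncard = Fintype.card F - 2 := by
  have hD : {d : F | d ≠ 0 ∧ d ≠ -1}.ncard = Fintype.card F - 2 := by
    rw [show {d : F | d ≠ 0 ∧ d ≠ -1} = {0, -1}ᶜ by ext; simp, Set.ncard_compl,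
      Set.ncard_pair (by simp), Nat.card_eq_fintype_card]
  rw [properConicsThrough_standardFrame h2, Set.InjOn.ncard_image, hD]
  intro d hd d' hd' h
  by_contra hne
  -- two admissible parameters force `q ≥ 4`, so the conic has a point off the frame
  have hq : 4 ≤ Fintype.card F := by
    have := (Set.one_lt_ncard_iff (Set.toFinite _)).2 ⟨d, d', hd, hd', hne⟩
    omega
  have hlt : (standardFrame F).ncard < (conicSet (frameConicMatrix d 1)).ncard := by
    rw [(isProperConic_conicSet_frameConicMatrix h2 hd.1 hd.2).ncard_eq h2]
    linarith [ncard_standardFrame_le (F := F)]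
  obtain ⟨p, hp, hpf⟩ := Set.exists_mem_notMem_of_ncard_lt_ncard hlt
  have hp' : p ∈ conicSet (frameConicMatrix d' 1) := by simpa [h] using hp
  exact hne (by simpa using mul_eq_mul_of_mem_conicSet_frameConicMatrix h2 hpf hp hp')

/-! ### Counting -/

theorem IsProperConic.ncard_properConicsThrough [Fintype F] (h2 : (2 : F) ≠ 0)
    {C T : Set (ℙ F (Fin 3 → F))} (hC : IsProperConic C) (hTC : T ⊆ C) (hT4 : T.ncard = 4) :
    (properConicsThrough T).ncard = Fintype.card F - 2 := by
  obtain ⟨g, rfl⟩ := hC.exists_smul_standardFrame_eq h2 hTC hT4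
  rw [properConicsThrough_smul, Set.ncard_smul_set, ncard_properConicsThrough_standardFrame h2]

theorem IsProperConic.eq_of_five_le_ncard_inter [Fintype F] (h2 : (2 : F) ≠ 0)
    {S C : Set (ℙ F (Fin 3 → F))} (hS : IsProperConic S) (hC : IsProperConic C)
    (h5 : 5 ≤ (S ∩ C).ncard) : S = C := by
  obtain ⟨T, hT, hT4⟩ := Set.exists_subset_card_eq (show 4 ≤ (S ∩ C).ncard by omega)
  obtain ⟨p, ⟨hpS, hpC⟩, hpT⟩ := Set.exists_mem_notMem_of_ncard_lt_ncard
    (show T.ncard < (S ∩ C).ncard by omega)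
  -- move four common points to the standard frame; a fifth one then fixes the conic
  obtain ⟨g, rfl⟩ := hC.exists_smul_standardFrame_eq h2 (hT.trans Set.inter_subset_right) hT4
  refine MulAction.injective g⁻¹ ((hS.smul g⁻¹).eq_of_standardFrame_subset h2 (hC.smul g⁻¹)
    ?_ ?_ (p := g⁻¹ • p) ?_ ?_ ?_)
  · exact Set.smul_set_subset_iff_subset_inv_smul_set.1 (hT.trans Set.inter_subset_left)
  · exact Set.smul_set_subset_iff_subset_inv_smul_set.1 (hT.trans Set.inter_subset_right)
  · rwa [← Set.mem_smul_set_iff_inv_smul_mem]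
  · exact Set.smul_mem_smul_set hpS
  · exact Set.smul_mem_smul_set hpC

theorem IsProperConic.setOf_inter_eq_properConicsThrough_sdiff [Fintype F]
    (h2 : (2 : F) ≠ 0) {C T : Set (ℙ F (Fin 3 → F))} (hC : IsProperConic C) (hTC : T ⊆ C)
    (hT4 : T.ncard = 4) :
    {S ∈ {S | IsProperConic S ∧ S ≠ C ∧ (S ∩ C).ncard = 4} | S ∩ C = T} =
      properConicsThrough T \ {C} := by
  ext S
  simp only [properConicsThrough, Set.mem_ofPred_eq, Set.mem_sdiff, Set.mem_singleton_iff]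
  constructor
  · rintro ⟨⟨hS, hSC, -⟩, rfl⟩
    exact ⟨⟨hS, Set.inter_subset_left⟩, hSC⟩
  · rintro ⟨⟨hS, hTS⟩, hSC⟩
    have hinter : S ∩ C = T := by
      refine (Set.eq_of_subset_of_ncard_le (Set.subset_inter hTS hTC) ?_).symm
      by_contra hlt
      exact hSC (hS.eq_of_five_le_ncard_inter h2 hC (by omega))
    exact ⟨⟨hS, hSC, hinter ▸ hT4⟩, hinter⟩

/-- In `PG(2,q)`, `q` an odd prime power, for a fixed proper conic `C` there are exactly
`binom(q+1,4) * (q-3)` proper conics meeting `C` in exactly four points. -/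
theorem num_proper_conics_meeting_in_four_points
    (F : Type) [Field F] [Fintype F] (hq : Odd (Fintype.card F))
    (C : Set (Projectivization F (Fin 3 → F))) (hC : IsProperConic C) :
    {S : Set (Projectivization F (Fin 3 → F)) |
        IsProperConic S ∧ S ≠ C ∧ (S ∩ C).ncard = 4}.ncard
      = (Fintype.card F + 1).choose 4 * (Fintype.card F - 3) := by
  have h2 : (2 : F) ≠ 0 := Ring.two_ne_zero fun h => by
    have := FiniteField.even_card_iff_char_two.1 h
    rw [Nat.odd_iff] at hq
    omega
  have hmaps : Set.MapsTo (· ∩ C) {S | IsProperConic S ∧ S ≠ C ∧ (S ∩ C).ncard = 4}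
      {T | T ⊆ C ∧ T.ncard = 4} := fun S hS => ⟨Set.inter_subset_right, hS.2.2⟩
  have hfiber (T) (hT : T ∈ {T | T ⊆ C ∧ T.ncard = 4}) :
      {S ∈ {S | IsProperConic S ∧ S ≠ C ∧ (S ∩ C).ncard = 4} | S ∩ C = T}.ncard =
        Fintype.card F - 3 := by
    rw [hC.setOf_inter_eq_properConicsThrough_sdiff h2 hT.1 hT.2,
      Set.ncard_sdiff_singleton_of_mem (show C ∈ properConicsThrough T from ⟨hC, hT.1⟩),
      hC.ncard_properConicsThrough h2 hT.1 hT.2]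
    omega
  rw [Set.ncard_eq_ncard_mul_of_mapsTo hmaps hfiber, Set.ncard_powerset_ncard C.toFinite,
    hC.ncard_eq h2]
end
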